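/- arXiv:1510.02722 — 3 statements merged into one kernel-verified Lean document; each statement's English description precedes it below -/
import Mathlib

section
/- Let ψ₁,…,ψ_k : [0,1] → ℝ^k be totally non-planar functions. Then the set {x = (x₁,…,x_k) ∈ [0,1]^k : det[ψ₁'(x₁),…,ψ_k'(x_k)] = 0} has Lebesgue measure zero, where det[ψ₁'(x₁),…,ψ_k'(x_k)] denotes the determinant of the k×k matrix whose i-th column is ψᵢ'(xᵢ). -/
open MeasureTheory

/-- The derivative of a curve `ψ : [0,1] → ℝ^k` (derivative within `[0,1]`). -/
noncomputable def curveDeriv (k : ℕ) (ψ : ℝ → (Fin k → ℝ)) (s : ℝ) : Fin k → ℝ :=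
  derivWithin ψ (Set.Icc 0 1) s

/-- A function `ψ : [0,1] → ℝ^k` is totally non-planar if it is `C¹` and for every
nonzero `v ∈ ℝ^k` the set `{s ∈ [0,1] : ψ'(s)·v = 0}` has Lebesgue measure zero. -/
def TotallyNonPlanar (k : ℕ) (ψ : ℝ → (Fin k → ℝ)) : Prop :=
  ContDiffOn ℝ 1 ψ (Set.Icc 0 1) ∧
    ∀ v : Fin k → ℝ, v ≠ 0 →
      volume {s : ℝ | s ∈ Set.Icc (0:ℝ) 1 ∧ ∑ i, curveDeriv k ψ s i * v i = 0} = 0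

/-! By induction on `n ≤ k`, the set of `x ∈ [0,1]^n` at which `ψ₁'(x₁), …, ψₙ'(xₙ)` are
linearly dependent is null. By Fubini it suffices to fix `(x₂, …, xₙ)` off a null set; by the
induction hypothesis `ψ₂'(x₂), …, ψₙ'(xₙ)` are then independent, so dependence forces `ψ₁'(x₁)`
into their span, a proper subspace. A nonzero functional `u ↦ u · v` vanishing on that span
shows, by total non-planarity of `ψ₁`, that this happens only for a null set of `x₁`. -/

open Set

lemma measure_prod_null_of_ae_null_symm {α β : Type*} [MeasurableSpace α] [MeasurableSpace β]
    {μ : Measure α} {ν : Measure β} [SFinite μ] [SFinite ν] {s : Set (α × β)}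
    (hs : MeasurableSet s) (h : ∀ᵐ y ∂ν, μ ((·, y) ⁻¹' s) = 0) : μ.prod ν s = 0 := by
  rw [Measure.prod_apply_symm hs]
  exact (lintegral_congr_ae h).trans lintegral_zero

lemma volume_eq_zero_of_ae_volume_cons {n : ℕ} {S : Set (Fin (n + 1) → ℝ)}
    (hS : MeasurableSet S) (h : ∀ᵐ y : Fin n → ℝ, volume {a : ℝ | Fin.cons a y ∈ S} = 0) :
    volume S = 0 := by
  have he := (volume_preserving_piFinSuccAbove (fun _ : Fin (n + 1) => ℝ) 0).symm
  rw [← he.measure_preimage hS.nullMeasurableSet, Measure.volume_eq_prod]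
  refine measure_prod_null_of_ae_null_symm (he.measurable hS) ?_
  simpa [preimage, MeasurableEquiv.piFinSuccAbove_symm_apply, Fin.insertNth_zero',
    Fin.consEquiv] using h

lemma LinearMap.exists_ne_zero_apply_eq_sum_mul {K ι : Type*} [Field K] [Fintype ι]
    [DecidableEq ι] (f : (ι → K) →ₗ[K] K) (hf : f ≠ 0) :
    ∃ v : ι → K, v ≠ 0 ∧ ∀ u, f u = ∑ i, u i * v i := by
  set v : ι → K := fun i => f fun j => if i = j then 1 else 0
  have hfv : ∀ u, f u = ∑ i, u i * v i := f.pi_apply_eq_sum_univ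
  exact ⟨v, fun hv => hf (LinearMap.ext fun u => by simp [hfv, hv]), hfv⟩

lemma TotallyNonPlanar.volume_deriv_mem_eq_zero {k : ℕ} {ψ : ℝ → (Fin k → ℝ)}
    (hψ : TotallyNonPlanar k ψ) {W : Submodule ℝ (Fin k → ℝ)} (hW : W ≠ ⊤) :
    volume {s | s ∈ Icc (0 : ℝ) 1 ∧ curveDeriv k ψ s ∈ W} = 0 := by
  obtain ⟨f, hf, hWf⟩ := W.exists_le_ker_of_lt_top hW.lt_top
  obtain ⟨v, hv, hfv⟩ := f.exists_ne_zero_apply_eq_sum_mul hf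
  refine measure_mono_null ?_ (hψ.2 v hv)
  rintro s ⟨hs, hsW⟩
  exact ⟨hs, (hfv _).symm.trans (hWf hsW)⟩

def degenerateSet {n k : ℕ} (φ : Fin n → ℝ → (Fin k → ℝ)) : Set (Fin n → ℝ) :=
  {x | (∀ i, x i ∈ Icc (0 : ℝ) 1) ∧ ¬LinearIndependent ℝ fun i => curveDeriv k (φ i) (x i)}

lemma isClosed_degenerateSet {n k : ℕ} {φ : Fin n → ℝ → (Fin k → ℝ)}
    (hφ : ∀ i, ContDiffOn ℝ 1 (φ i) (Icc 0 1)) : IsClosed (degenerateSet φ) := by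
  have hderiv : ContinuousOn (fun x : Fin n → ℝ => fun i => curveDeriv k (φ i) (x i))
      (univ.pi fun _ => Icc 0 1) := continuousOn_pi.2 fun i =>
    ((hφ i).continuousOn_derivWithin (uniqueDiffOn_Icc one_pos) le_rfl).comp
      (continuous_apply i).continuousOn fun x hx => hx i trivial
  convert hderiv.preimage_isClosed_of_isClosed (isClosed_set_pi fun _ _ => isClosed_Icc)
    (isOpen_setOfPred_linearIndependent (𝕜 := ℝ)).isClosed_compl using 1
  ext x
  simp only [degenerateSet, mem_ofPred_eq, mem_inter_iff, mem_pi, mem_univ, true_implies,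
    mem_preimage, mem_compl_iff]

lemma volume_cons_mem_degenerateSet {n k : ℕ} (hnk : n < k) {φ : Fin (n + 1) → ℝ → (Fin k → ℝ)}
    (hφ : TotallyNonPlanar k (φ 0)) {y : Fin n → ℝ}
    (hy : y ∉ degenerateSet fun i => φ i.succ) :
    volume {a | Fin.cons a y ∈ degenerateSet φ} = 0 := by
  set tail : Fin n → Fin k → ℝ := fun j => curveDeriv k (φ j.succ) (y j)
  have hspan : Submodule.span ℝ (range tail) ≠ ⊤ := by
    intro htop
    have hrank := finrank_range_le_card (R := ℝ) tail
    rw [Set.finrank, htop, finrank_top, Module.finrank_fin_fun, Fintype.card_fin] at hrank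
    omega
  refine measure_mono_null ?_ (hφ.volume_deriv_mem_eq_zero hspan)
  rintro a ⟨ha, hdep⟩
  refine ⟨by simpa using ha 0, ?_⟩
  have hcons : (fun i => curveDeriv k (φ i) ((Fin.cons a y : Fin (n + 1) → ℝ) i)) =
      Fin.cons (curveDeriv k (φ 0) a) tail := by
    ext i : 1
    exact Fin.cases rfl (fun j => rfl) i
  rw [hcons, linearIndependent_finCons] at hdep
  have htail : LinearIndependent ℝ tail := by
    by_contra h
    exact hy ⟨fun j => by simpa using ha j.succ, h⟩
  simpa [htail] using hdep

lemma volume_degenerateSet_eq_zero {k : ℕ} :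
    ∀ {n : ℕ}, n ≤ k → ∀ φ : Fin n → ℝ → (Fin k → ℝ), (∀ i, TotallyNonPlanar k (φ i)) →
      volume (degenerateSet φ) = 0
  | 0, _, φ, _ => by simp [degenerateSet]
  | n + 1, hnk, φ, hφ => by
    have htail := volume_degenerateSet_eq_zero (by omega) (fun j => φ j.succ) fun j => hφ j.succ
    refine volume_eq_zero_of_ae_volume_cons
      (isClosed_degenerateSet fun i => (hφ i).1).measurableSet ?_
    filter_upwards [measure_eq_zero_iff_ae_notMem.1 htail] with y hy
    exact volume_cons_mem_degenerateSet hnk (hφ 0) hy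

lemma det_of_cols_eq_zero_iff_not_linearIndependent {K ι : Type*} [Field K] [Fintype ι]
    [DecidableEq ι] (u : ι → ι → K) :
    (Matrix.of fun p i => u i p).det = 0 ↔ ¬LinearIndependent K u := by
  change (Matrix.of u).transpose.det = 0 ↔ ¬LinearIndependent K (Matrix.of u).row
  rw [Matrix.det_transpose, Matrix.linearIndependent_rows_iff_isUnit,
    Matrix.isUnit_iff_isUnit_det, isUnit_iff_ne_zero, not_not]

/-- If `ψ₁, …, ψ_k : [0,1] → ℝ^k` are totally non-planar, then the set of
`x ∈ [0,1]^k` where `det [ψ₁'(x₁), …, ψ_k'(x_k)] = 0` has Lebesgue measure zero. -/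
theorem stmt4 (k : ℕ) (ψ : Fin k → ℝ → (Fin k → ℝ))
    (h : ∀ i, TotallyNonPlanar k (ψ i)) :
    volume {x : Fin k → ℝ | (∀ i, x i ∈ Set.Icc (0:ℝ) 1) ∧
      (Matrix.of fun p i => curveDeriv k (ψ i) (x i) p).det = 0} = 0 := by
  simp_rw [det_of_cols_eq_zero_iff_not_linearIndependent]
  exact volume_degenerateSet_eq_zero le_rfl ψ h
end

section
/- Let ψ₁,…,ψ_k : [0,1] → ℝ^k be totally non-planar functions. Then for every i ∈ {1,…,k}, for Lebesgue-almost every y = (y₁,…,yᵢ) ∈ [0,1]^i, the subspace ℝ-span{ψ₁'(y₁),…,ψᵢ'(yᵢ)} of ℝ^k has dimension i. -/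
open MeasureTheory

open Module Set

/-! Induction on the number of curves, adding one coordinate at a time by Fubini. Once
`ψ₁'(y₁), …, ψₙ'(yₙ)` are independent they span a proper subspace, which lies in a hyperplane
`v⊥`; total non-planarity of the next curve makes `{t | ψ'(t) ∈ v⊥}` null, so the enlarged family
stays independent for almost every `t`. Independence is an open condition and the derivatives are
continuous, which gives the measurability Fubini needs. -/

lemma Matrix.exists_ne_zero_forall_dotProduct_eq_zero {K ι : Type*} [Field K] [Fintype ι]
    [DecidableEq ι] {p : Submodule K (ι → K)} (hp : p ≠ ⊤) :
    ∃ v ≠ 0, ∀ u ∈ p, u ⬝ᵥ v = 0 := by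
  obtain ⟨f, hf, hpf⟩ := p.exists_le_ker_of_lt_top hp.lt_top
  refine ⟨(dotProductEquiv K ι).symm f, by simpa using hf, fun u hu => ?_⟩
  rw [dotProduct_comm, ← dotProductEquiv_apply_apply, LinearEquiv.apply_symm_apply]
  exact hpf hu

lemma isOpen_setOf_forall_mem_imp_linearIndependent {X E : Type*} [TopologicalSpace X]
    [NormedAddCommGroup E] [NormedSpace ℝ E] [FiniteDimensional ℝ E] {n : ℕ} {S : Set X}
    (hS : IsClosed S) {w : Fin n → X → E} (hw : ∀ j, ContinuousOn (w j) S) :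
    IsOpen {y : Fin n → X | (∀ j, y j ∈ S) → LinearIndependent ℝ fun j => w j (y j)} := by
  have hbox : IsClosed {y : Fin n → X | ∀ j, y j ∈ S} := by
    rw [ofPred_forall]
    exact isClosed_iInter fun j => hS.preimage (continuous_apply j)
  have hcont : ContinuousOn (fun y : Fin n → X => fun j => w j (y j)) {y | ∀ j, y j ∈ S} :=
    continuousOn_pi.2 fun j => (hw j).comp (continuous_apply j).continuousOn fun _ hy => hy j
  have hbad := hcont.preimage_isClosed_of_isClosed hbox
    (isOpen_setOfPred_linearIndependent (𝕜 := ℝ)).isClosed_compl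
  convert hbad.isOpen_compl using 1
  ext y
  simp [imp_iff_not_or]

lemma ae_forall_iff_ae_ae_finCons {α : Type*} [MeasureSpace α] [SigmaFinite (volume : Measure α)]
    {n : ℕ} {P : (Fin (n + 1) → α) → Prop} (hP : MeasurableSet {y | P y}) :
    (∀ᵐ y, P y) ↔ ∀ᵐ x : Fin n → α, ∀ᵐ t : α, P (Fin.cons t x) := by
  set e := MeasurableEquiv.piFinSuccAbove (fun _ : Fin (n + 1) => α) 0
  have he : MeasurePreserving e.symm volume volume :=
    (volume_preserving_piFinSuccAbove (fun _ : Fin (n + 1) => α) 0).symm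
  have hPe : MeasurableSet {z : α × (Fin n → α) | P (e.symm z)} := e.symm.measurable hP
  rw [← he.map_eq, ae_map_iff e.symm.measurable.aemeasurable hP, Measure.volume_eq_prod,
    Measure.ae_prod_iff_ae_ae hPe, Measure.ae_ae_comm hPe]
  simp only [e, MeasurableEquiv.piFinSuccAbove_symm_apply, Fin.insertNthEquiv, Equiv.coe_fn_mk,
    Fin.insertNth_zero']

lemma ae_linearIndependent_finCons {α K E : Type*} [MeasurableSpace α] {μ : Measure α}
    [Field K] [AddCommGroup E] [Module K E] {S : Set α} {n : ℕ} {u : Fin n → E}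
    (hu : LinearIndependent K u) (hn : n < finrank K E) {v : α → E}
    (hv : ∀ p : Submodule K E, p ≠ ⊤ → ∀ᵐ t ∂μ, t ∈ S → v t ∉ p) :
    ∀ᵐ t ∂μ, t ∈ S → LinearIndependent K (Fin.cons (v t) u : Fin (n + 1) → E) := by
  have hspan : Submodule.span K (range u) ≠ ⊤ := by
    intro htop
    have := finrank_span_eq_card hu
    rw [htop, finrank_top, Fintype.card_fin] at this
    omega
  filter_upwards [hv _ hspan] with t ht hS using linearIndependent_finCons.2 ⟨hu, ht hS⟩

theorem ae_linearIndependent_of_ae_notMem_submodule {E : Type*} [NormedAddCommGroup E]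
    [NormedSpace ℝ E] [FiniteDimensional ℝ E] {S : Set ℝ} (hS : IsClosed S) :
    ∀ {n : ℕ} (w : Fin n → ℝ → E), n ≤ finrank ℝ E → (∀ j, ContinuousOn (w j) S) →
      (∀ j, ∀ p : Submodule ℝ E, p ≠ ⊤ → ∀ᵐ t, t ∈ S → w j t ∉ p) →
      ∀ᵐ y : Fin n → ℝ, (∀ j, y j ∈ S) → LinearIndependent ℝ fun j => w j (y j)
  | 0, _, _, _, _ => ae_of_all _ fun _ _ => linearIndependent_empty_type
  | n + 1, w, hn, hcont, hw => by
    rw [ae_forall_iff_ae_ae_finCons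
      (isOpen_setOf_forall_mem_imp_linearIndependent hS hcont).measurableSet]
    have ih := ae_linearIndependent_of_ae_notMem_submodule hS (fun j => w j.succ) (by omega)
      (fun j => hcont j.succ) (fun j => hw j.succ)
    filter_upwards [ih] with x hx
    by_cases hxS : ∀ j, x j ∈ S
    · filter_upwards [ae_linearIndependent_finCons (hx hxS) (by omega) (hw 0)] with t ht htS
      have hcons : (fun j => w j ((Fin.cons t x : Fin (n + 1) → ℝ) j)) =
          Fin.cons (w 0 t) fun j => w j.succ (x j) := by
        ext1 j
        cases j using Fin.cases <;> rfl
      rw [hcons]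
      exact ht (htS 0)
    · refine ae_of_all _ fun t htS => absurd (fun j => ?_) hxS
      simpa using htS j.succ

lemma TotallyNonPlanar.continuousOn_curveDeriv {k : ℕ} {ψ : ℝ → Fin k → ℝ}
    (h : TotallyNonPlanar k ψ) : ContinuousOn (curveDeriv k ψ) (Icc 0 1) :=
  h.1.continuousOn_derivWithin uniqueDiffOn_Icc_zero_one le_rfl

lemma TotallyNonPlanar.ae_curveDeriv_notMem {k : ℕ} {ψ : ℝ → Fin k → ℝ}
    (h : TotallyNonPlanar k ψ) {p : Submodule ℝ (Fin k → ℝ)} (hp : p ≠ ⊤) :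
    ∀ᵐ s, s ∈ Icc (0 : ℝ) 1 → curveDeriv k ψ s ∉ p := by
  obtain ⟨v, hv, hpv⟩ := Matrix.exists_ne_zero_forall_dotProduct_eq_zero hp
  rw [ae_iff]
  refine measure_mono_null (fun s hs => ?_) (h.2 v hv)
  simp only [mem_ofPred_eq, Classical.not_imp, not_not] at hs
  exact ⟨hs.1, hpv _ hs.2⟩

theorem stmt5_general (k : ℕ) (ψ : Fin k → ℝ → (Fin k → ℝ))
    (h : ∀ i, TotallyNonPlanar k (ψ i)) (i : ℕ) (hik : i ≤ k) :
    ∀ᵐ y : Fin i → ℝ ∂(volume.restrict {y : Fin i → ℝ | ∀ j, y j ∈ Set.Icc (0:ℝ) 1}),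
      Module.finrank ℝ (Submodule.span ℝ
        (Set.range fun j : Fin i => curveDeriv k (ψ (Fin.castLE hik j)) (y j))) = i := by
  have hbox : MeasurableSet {y : Fin i → ℝ | ∀ j, y j ∈ Icc (0 : ℝ) 1} := by
    rw [ofPred_forall]
    exact MeasurableSet.iInter fun j => measurable_pi_apply j measurableSet_Icc
  rw [ae_restrict_iff' hbox]
  filter_upwards [ae_linearIndependent_of_ae_notMem_submodule isClosed_Icc
    (fun j => curveDeriv k (ψ (Fin.castLE hik j))) (by simpa using hik)
    (fun _ => (h _).continuousOn_curveDeriv) (fun _ _ hp => (h _).ae_curveDeriv_notMem hp)]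
    with y hy hyS
  rw [finrank_span_eq_card (hy hyS), Fintype.card_fin]

/-- If `ψ₁, …, ψ_k : [0,1] → ℝ^k` are totally non-planar, then for every
`i ∈ {1, …, k}` and Lebesgue-almost every `y ∈ [0,1]^i`, the span of
`ψ₁'(y₁), …, ψᵢ'(yᵢ)` has dimension `i`. -/
theorem stmt5 (k : ℕ) (ψ : Fin k → ℝ → (Fin k → ℝ))
    (h : ∀ i, TotallyNonPlanar k (ψ i)) (i : ℕ) (hi1 : 1 ≤ i) (hik : i ≤ k) :
    ∀ᵐ y : Fin i → ℝ ∂(volume.restrict {y : Fin i → ℝ | ∀ j, y j ∈ Set.Icc (0:ℝ) 1}),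
      Module.finrank ℝ (Submodule.span ℝ
        (Set.range fun j : Fin i => curveDeriv k (ψ (Fin.castLE hik j)) (y j))) = i :=
  stmt5_general k ψ h i hik
end

section
/- Let ψ₁,…,ψ_k : [0,1] → ℝ^k be totally non-planar functions and let M₁,…,M_k ∈ GL(k,ℝ). Define Ψ : [0,1]^k → ℝ^k by Ψ(t₁,…,t_k) = Σ_{i=1}^k Mᵢψᵢ(tᵢ). Then the pushforward measure Ψ_*λ_{[0,1]^k} of Lebesgue measure on [0,1]^k is absolutely continuous with respect to Lebesgue measure on ℝ^k. -/
/-!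
The Jacobian of `Ψ` at `t` is the linear map `u ↦ ∑ᵢ uᵢ wᵢ(tᵢ)` with `wᵢ = Mᵢ ψᵢ'`. Total
non-planarity of `ψᵢ` and invertibility of `Mᵢ` say that `wᵢ` avoids every proper subspace of
`ℝ^k` almost everywhere. Adding one coordinate at a time, Fubini's theorem then shows that
`w₁(t₁), …, w_k(t_k)` are linearly independent for almost every `t`, so `Ψ` has an invertible
derivative almost everywhere on the cube. Cutting that set into countably many pieces on which `Ψ`
is injective, the change of variables formula shows that `Ψ`-preimages of null sets are null.
-/

open MeasureTheory

open Set Module Function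
open scoped NNReal

section LinearIndependence

variable {α V : Type*} [MeasurableSpace α]

def AEAvoidsProperSubspaces [AddCommGroup V] [Module ℝ V] (μ : Measure α) (w : α → V) :
    Prop :=
  ∀ W : Submodule ℝ V, W ≠ ⊤ → ∀ᵐ s ∂μ, w s ∉ W

namespace AEAvoidsProperSubspaces

variable [AddCommGroup V] [Module ℝ V] {μ : Measure α} {w : α → V}

lemma comp_surjective {V' : Type*} [AddCommGroup V'] [Module ℝ V']
    (hw : AEAvoidsProperSubspaces μ w) {f : V →ₗ[ℝ] V'} (hf : Surjective f) :
    AEAvoidsProperSubspaces μ (f ∘ w) := fun W hW =>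
  hw (W.comap f) fun h =>
    hW (top_le_iff.1 (LinearMap.range_eq_top.2 hf ▸ LinearMap.range_le_iff_comap.2 h))

lemma ae_notMem_span [FiniteDimensional ℝ V] (hw : AEAvoidsProperSubspaces μ w)
    {ι : Type*} [Fintype ι] (g : ι → V) (hg : Fintype.card ι < finrank ℝ V) :
    ∀ᵐ s ∂μ, w s ∉ Submodule.span ℝ (range g) :=
  hw _ fun h => (finrank_le_of_span_eq_top h).not_gt hg

end AEAvoidsProperSubspaces

variable [NormedAddCommGroup V] [NormedSpace ℝ V] [FiniteDimensional ℝ V] [MeasurableSpace V]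
  [BorelSpace V]

lemma measurableSet_setOf_linearIndependent {ι : Type*} [Finite ι] {w : ι → α → V}
    (hw : ∀ i, Measurable (w i)) :
    MeasurableSet {t : ι → α | LinearIndependent ℝ fun i => w i (t i)} := by
  have := Fintype.ofFinite ι
  exact isOpen_setOfPred_linearIndependent.measurableSet.preimage
    (measurable_pi_lambda _ fun i => (hw i).comp (measurable_pi_apply i))

theorem ae_linearIndependent_pi {μ : Measure α} [SigmaFinite μ] :
    ∀ {m : ℕ}, m ≤ finrank ℝ V → ∀ {w : Fin m → α → V}, (∀ i, Measurable (w i)) →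
      (∀ i, AEAvoidsProperSubspaces μ (w i)) →
      ∀ᵐ t ∂Measure.pi fun _ => μ, LinearIndependent ℝ fun i => w i (t i)
  | 0, _, _, _, _ => ae_of_all _ fun _ => linearIndependent_empty_type
  | m + 1, hm, w, hmeas, hw => by
    set S := {t : Fin (m + 1) → α | LinearIndependent ℝ fun i => w i (t i)}
    have hS : MeasurableSet S := measurableSet_setOf_linearIndependent hmeas
    set φ := (MeasurableEquiv.piFinSuccAbove (fun _ : Fin (m + 1) => α) 0).symm
    have hφ : MeasurePreserving φ (μ.prod (Measure.pi fun _ => μ)) (Measure.pi fun _ => μ) :=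
      (measurePreserving_piFinSuccAbove (fun _ => μ) 0).symm
    change ∀ᵐ t ∂_, t ∈ S
    rw [← hφ.map_eq, ae_map_iff (p := (· ∈ S)) φ.measurable.aemeasurable hS,
      Measure.ae_prod_iff_ae_ae (φ.measurable hS),
      Measure.ae_ae_comm (p := fun x y => φ (x, y) ∈ S) (φ.measurable hS)]
    filter_upwards [ae_linearIndependent_pi (by omega) (fun j => hmeas j.succ)
      (fun j => hw j.succ)] with y hy
    filter_upwards [(hw 0).ae_notMem_span (fun j => w j.succ (y j)) (by simp; omega)] with x hx
    have hfam : (fun i => w i (φ (x, y) i)) = Fin.cons (w 0 x) fun j => w j.succ (y j) := by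
      ext i : 1
      cases i using Fin.cases <;> simp [φ, MeasurableEquiv.piFinSuccAbove_symm_apply]
    change LinearIndependent ℝ (fun i => w i (φ (x, y) i))
    rw [hfam, linearIndependent_finCons]
    exact ⟨hy, hx⟩

end LinearIndependence

lemma ContinuousOn.measurableSet_inter_preimage {α β : Type*} [TopologicalSpace α]
    [MeasurableSpace α] [OpensMeasurableSpace α] [TopologicalSpace β] [MeasurableSpace β]
    [BorelSpace β] {f : α → β} {s : Set α} (hf : ContinuousOn f s) (hs : MeasurableSet s)
    {N : Set β} (hN : MeasurableSet N) : MeasurableSet (s ∩ f ⁻¹' N) := by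
  rw [← Subtype.image_preimage_coe]
  exact (MeasurableEmbedding.subtype_coe hs).measurableSet_image'
    ((continuousOn_iff_continuous_domRestrict.1 hf).measurable hN)

section ChangeOfVariables

variable {E : Type*} [NormedAddCommGroup E] [NormedSpace ℝ E] [FiniteDimensional ℝ E]

lemma ContinuousLinearMap.exists_pos_injOn_of_approximatesLinearOn {A : E →L[ℝ] E}
    (hA : Injective A) :
    ∃ δ : ℝ≥0, δ ≠ 0 ∧
      ∀ (f : E → E) (t : Set E), ApproximatesLinearOn f A t δ → InjOn f t := by
  obtain ⟨K, hK, hAK⟩ := (A : E →ₗ[ℝ] E).exists_antilipschitzWith (LinearMap.ker_eq_bot.2 hA)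
  refine ⟨K⁻¹ / 2, by simp [hK.ne'], fun f t hf => injOn_iff_injective.2 ?_⟩
  have := (hAK.domRestrict t).add_lipschitzWith hf.lipschitz_sub
    (NNReal.half_lt_self (inv_ne_zero hK.ne'))
  exact (by simpa using this.injective : Injective fun x : t => f x)

variable [MeasurableSpace E] [BorelSpace E] (μ : Measure E) [μ.IsAddHaarMeasure]
  {f : E → E} {f' : E → E →L[ℝ] E}

lemma addHaar_eq_zero_of_addHaar_image_eq_zero {u : Set E} (hu : MeasurableSet u)
    (hf' : ∀ x ∈ u, HasFDerivWithinAt f (f' x) u x) (hf'_inj : ∀ x ∈ u, Injective (f' x))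
    (hf : InjOn f u) (himg : μ (f '' u) = 0) : μ u = 0 := by
  rw [← lintegral_abs_det_fderiv_eq_addHaar_image μ hu hf' hf,
    lintegral_eq_zero_iff' (aemeasurable_ofReal_abs_det_fderivWithin μ hu hf'),
    Filter.EventuallyEq, ae_restrict_iff' hu] at himg
  rw [measure_eq_zero_iff_ae_notMem]
  filter_upwards [himg] with x hx hxu
  have hdet : (f' x).det ≠ 0 :=
    fun h => LinearMap.det_eq_zero_iff_ker_ne_bot.1 h (LinearMap.ker_eq_bot.2 (hf'_inj x hxu))
  simpa [hdet] using hx hxu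

open Classical in
theorem map_restrict_absolutelyContinuous_of_hasFDerivWithinAt {s : Set E}
    (hs : MeasurableSet s) (hf' : ∀ x ∈ s, HasFDerivWithinAt f (f' x) s x)
    (hf'_inj : ∀ x ∈ s, Injective (f' x)) :
    (μ.restrict s).map f ≪ μ := by
  refine Measure.AbsolutelyContinuous.mk fun N hN hN0 => ?_
  have hf : ContinuousOn f s := fun x hx => (hf' x hx).continuousWithinAt
  rw [Measure.map_apply_of_aemeasurable (hf.aemeasurable hs) hN, Measure.restrict_apply' hs]
  -- `f` will be injective on every piece where it approximates some `A n` to within `r (A n)`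
  let r : (E →L[ℝ] E) → ℝ≥0 := fun A =>
    if hA : Injective A then (A.exists_pos_injOn_of_approximatesLinearOn hA).choose else 1
  have hr : ∀ A, r A ≠ 0 := fun A => by
    by_cases hA : Injective A
    · simpa [r, hA] using (A.exists_pos_injOn_of_approximatesLinearOn hA).choose_spec.1
    · simp [r, hA]
  obtain ⟨t, A, -, ht, hst, hA, hAf'⟩ :=
    exists_partition_approximatesLinearOn_of_hasFDerivWithinAt f s f' hf' r hr
  refine measure_mono_null (fun x hx => ?_) (measure_iUnion_null fun n => ?_ :
    μ (⋃ n, s ∩ t n ∩ f ⁻¹' N) = 0)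
  · obtain ⟨n, hn⟩ := mem_iUnion.1 (hst hx.2)
    exact mem_iUnion.2 ⟨n, ⟨hx.2, hn⟩, hx.1⟩
  rcases (s ∩ t n ∩ f ⁻¹' N).eq_empty_or_nonempty with h | ⟨x, hx⟩
  · rw [h, measure_empty]
  obtain ⟨y, hy, hAy⟩ := hAf' ⟨x, hx.1.1⟩ n
  have hAn : Injective (A n) := hAy ▸ hf'_inj y hy
  have hinj : InjOn f (s ∩ t n) :=
    (A n).exists_pos_injOn_of_approximatesLinearOn hAn |>.choose_spec.2 f _
      (by simpa [r, hAn] using hA n)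
  have hsub : s ∩ t n ∩ f ⁻¹' N ⊆ s := fun z hz => hz.1.1
  exact addHaar_eq_zero_of_addHaar_image_eq_zero μ
    ((hf.mono inter_subset_left).measurableSet_inter_preimage (hs.inter (ht n)) hN)
    (fun z hz => (hf' z (hsub hz)).mono hsub) (fun z hz => hf'_inj z (hsub hz))
    (hinj.mono inter_subset_left) (measure_mono_null (image_subset_iff.2 fun z hz => hz.2) hN0)

end ChangeOfVariables

section SeparableSum

variable {ι E : Type*} [Fintype ι] [NormedAddCommGroup E] [NormedSpace ℝ E]

lemma hasFDerivWithinAt_sum_apply {f : ι → ℝ → E} {f' : ι → E} {s : ι → Set ℝ} {t : ι → ℝ}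
    (hf : ∀ i, HasDerivWithinAt (f i) (f' i) (s i) (t i)) :
    HasFDerivWithinAt (fun t => ∑ i, f i (t i))
      (∑ i, (ContinuousLinearMap.proj i : (ι → ℝ) →L[ℝ] ℝ).smulRight (f' i)) (univ.pi s) t := by
  refine HasFDerivWithinAt.fun_sum fun i _ => ?_
  refine ((hf i).hasFDerivWithinAt.comp t (hasFDerivWithinAt_apply (𝕜 := ℝ) i t (univ.pi s))
    fun u hu => hu i (mem_univ i)).congr_fderiv ?_
  ext u : 1
  simp

lemma LinearIndependent.injective_sum_proj_smulRight {v : ι → E} (hv : LinearIndependent ℝ v) :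
    Injective ⇑(∑ i, (ContinuousLinearMap.proj i : (ι → ℝ) →L[ℝ] ℝ).smulRight (v i)) := by
  convert linearIndependent_iff_injective_fintypeLinearCombination.1 hv
  ext u
  simp [Fintype.linearCombination_apply]

end SeparableSum

namespace TotallyNonPlanar

variable {k : ℕ} {ψ : ℝ → Fin k → ℝ}

lemma measurable_curveDeriv (hψ : ContDiffOn ℝ 1 ψ (Icc 0 1)) :
    Measurable (curveDeriv k ψ) := by
  classical
  have hcont : ContinuousOn (curveDeriv k ψ) (Icc 0 1) :=
    hψ.continuousOn_derivWithin (uniqueDiffOn_Icc zero_lt_one) le_rfl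
  convert hcont.measurable_piecewise (continuousOn_const (c := 0)) measurableSet_Icc using 1
  ext1 s
  by_cases hs : s ∈ Icc (0 : ℝ) 1
  · simp [hs]
  · simp [hs, curveDeriv, derivWithin_zero_of_notMem_closure, closure_Icc]

lemma aeAvoidsProperSubspaces (h : TotallyNonPlanar k ψ) :
    AEAvoidsProperSubspaces (volume.restrict (Icc 0 1)) (curveDeriv k ψ) := by
  intro W hW
  obtain ⟨φ, hφ, hWφ⟩ := W.exists_le_ker_of_lt_top hW.lt_top
  set v : Fin k → ℝ := fun i => φ fun j => if i = j then 1 else 0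
  have hφv : ∀ z, φ z = ∑ i, z i * v i := φ.pi_apply_eq_sum_univ
  have hv : v ≠ 0 := fun hv => hφ (LinearMap.ext fun z => by simp [hφv, hv])
  rw [ae_restrict_iff' measurableSet_Icc, ae_iff]
  refine measure_mono_null (fun s hs => ?_) (h.2 v hv)
  simp only [mem_ofPred_eq, Classical.not_imp, not_not] at hs
  exact ⟨hs.1, (hφv _).symm.trans (hWφ hs.2)⟩

lemma hasDerivWithinAt (h : TotallyNonPlanar k ψ) {s : ℝ} (hs : s ∈ Icc (0 : ℝ) 1) :
    HasDerivWithinAt ψ (curveDeriv k ψ s) (Icc 0 1) s :=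
  (h.1.differentiableOn one_ne_zero s hs).hasDerivWithinAt

end TotallyNonPlanar

/-- If `ψ₁, …, ψ_k : [0,1] → ℝ^k` are totally non-planar and
`M₁, …, M_k ∈ GL(k,ℝ)`, then the pushforward of Lebesgue measure on `[0,1]^k` under
`Ψ(t₁,…,t_k) = Σᵢ Mᵢ ψᵢ(tᵢ)` is absolutely continuous with respect to Lebesgue measure. -/
theorem stmt7 (k : ℕ) (ψ : Fin k → ℝ → (Fin k → ℝ))
    (h : ∀ i, TotallyNonPlanar k (ψ i))
    (M : Fin k → Matrix (Fin k) (Fin k) ℝ) (hM : ∀ i, IsUnit (M i)) :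
    Measure.map (fun t : Fin k → ℝ => ∑ i, (M i).mulVec (ψ i (t i)))
        (volume.restrict (Set.univ.pi fun _ : Fin k => Set.Icc (0:ℝ) 1)) ≪ volume := by
  set cube : Set (Fin k → ℝ) := univ.pi fun _ => Icc 0 1
  set w : Fin k → ℝ → Fin k → ℝ := fun i s => (M i).mulVec (curveDeriv k (ψ i) s)
  set G := {t : Fin k → ℝ | LinearIndependent ℝ fun i => w i (t i)}
  have hw : ∀ i, Measurable (w i) := fun i =>
    (M i).mulVecLin.continuous_of_finiteDimensional.measurable.comp
      (TotallyNonPlanar.measurable_curveDeriv (h i).1)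
  have hG : MeasurableSet G := measurableSet_setOf_linearIndependent hw
  have hG_ae : ∀ᵐ t ∂volume.restrict cube, t ∈ G := by
    rw [volume_pi, Measure.restrict_pi_pi]
    exact ae_linearIndependent_pi (by simp) hw fun i =>
      (h i).aeAvoidsProperSubspaces.comp_surjective (f := (M i).mulVecLin)
        (Matrix.mulVec_surjective_iff_isUnit.2 (hM i))
  have hΨ : ∀ t ∈ G ∩ cube,
      HasFDerivWithinAt (fun t : Fin k → ℝ => ∑ i, (M i).mulVec (ψ i (t i)))
        (∑ i, (ContinuousLinearMap.proj i : (Fin k → ℝ) →L[ℝ] ℝ).smulRight (w i (t i)))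
        (G ∩ cube) t := fun t ht =>
    (hasFDerivWithinAt_sum_apply fun i =>
      (M i).mulVecLin.toContinuousLinearMap.hasFDerivAt.comp_hasDerivWithinAt (t i)
        ((h i).hasDerivWithinAt (ht.2 i (mem_univ i)))).mono inter_subset_right
  rw [← Measure.restrict_eq_self_of_ae_mem hG_ae, Measure.restrict_restrict hG]
  exact map_restrict_absolutelyContinuous_of_hasFDerivWithinAt volume
    (hG.inter (MeasurableSet.univ_pi fun _ => measurableSet_Icc)) hΨ
    fun t ht => ht.1.injective_sum_proj_smulRight
end
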